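/- Define ε(n) = 1 + (⌈log₂ n⌉ - log₂ n) - 2^(⌈log₂ n⌉ - log₂ n). Restricted to positive integers n, ε(n) never attains the value δ = 1 - log₂ e + log₂ log₂ e, but δ is the supremum of {ε(n) : n ∈ ℕ, n ≥ 1}. -/

import Mathlib

/-!
Write `ε(x) = f(⌈log₂ x⌉ - log₂ x)` with `f(t) = 1 + t - 2^t`. Since `2^t` lies strictly above its
tangent line at `t* = log₂ log₂ e` (where the slope `2^t log 2` equals `1`), `f` attains its
maximum `δ` exactly at `t*`. Hence `ε(n) = δ` forces `n = 2^m log 2`, so `log 2` would be rational,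
i.e. `e^a = 2^b` for positive integers `a, b`; this is excluded by the Hermite–Lindemann
approximations of `e^a`. Along `n_k = ⌈2^k log 2⌉` one has `⌈log₂ n_k⌉ = k` and
`k - log₂ n_k → -log₂ log 2 = t*`, so `ε(n_k) → δ`.
-/

noncomputable def eps (n : ℝ) : ℝ :=
  1 + ((⌈Real.logb 2 n⌉ : ℝ) - Real.logb 2 n)
    - (2 : ℝ) ^ ((⌈Real.logb 2 n⌉ : ℝ) - Real.logb 2 n)

noncomputable def delta : ℝ :=
  1 - Real.logb 2 (Real.exp 1) + Real.logb 2 (Real.logb 2 (Real.exp 1))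

open Real Filter Topology Polynomial

theorem exp_intCast_ne_intCast {n : ℤ} (hn : n ≠ 0) (m : ℤ) : exp n ≠ m := by
  -- For large primes `p`, `n_p m - p g_p(n)` is an integer of absolute value `< 1`, hence `0`,
  -- so `p ∣ n_p m`, although `p ∤ n_p` and `p > |m|`.
  intro hm
  obtain ⟨c, hc⟩ := LindemannWeierstrass.exp_polynomial_approx (X - C n) (by simpa using hn)
  obtain ⟨p, hp, hpc, hpn, hpm⟩ :
      ∃ p : ℕ, p.Prime ∧ c ^ p < (p - 1).factorial ∧ n.natAbs < p ∧ m.natAbs < p := by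
    obtain ⟨K, hK⟩ := eventually_atTop.mp (FloorSemiring.eventually_mul_pow_lt_factorial_sub 1 c 1)
    obtain ⟨p, hpK, hp⟩ := Nat.exists_infinite_primes (K + n.natAbs + m.natAbs + 1)
    exact ⟨p, hp, by simpa using hK p (by omega), by omega, by omega⟩
  obtain ⟨np, hnp, gp, -, happrox⟩ := hc p (by simpa using hpn) hp
  have hsmall := happrox (r := (n : ℂ)) (by rw [aroots_X_sub_C]; simp)
  have hint : np • Complex.exp n - p • aeval (n : ℂ) gp = ((np * m - p * gp.eval n : ℤ) : ℂ) := by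
    rw [← Complex.ofReal_intCast, ← Complex.ofReal_exp, hm]
    simp [aeval_def, eval₂_eq_eval_map]
  have hzero : np * m - p * gp.eval n = 0 := by
    rw [hint, Complex.norm_intCast] at hsmall
    have : |((np * m - p * gp.eval n : ℤ) : ℝ)| < 1 :=
      hsmall.trans_lt ((div_lt_one (by positivity)).mpr hpc)
    exact Int.abs_lt_one_iff.mp (by exact_mod_cast this)
  have hdvd : (p : ℤ) ∣ np * m := ⟨_, sub_eq_zero.mp hzero⟩
  rcases (Int.prime_iff_natAbs_prime.mpr (by simpa using hp)).dvd_or_dvd hdvd with h | h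
  · exact hnp h
  · have hm0 : m ≠ 0 := by
      rintro rfl
      exact (exp_pos n).ne' (by exact_mod_cast hm)
    exact hpm.not_ge (Nat.le_of_dvd (Int.natAbs_pos.mpr hm0) (Int.natCast_dvd.mp h))

theorem irrational_log_two : Irrational (log 2) := by
  rintro ⟨q, hq⟩
  have hq0 : q.num ≠ 0 := by
    rw [Rat.num_ne_zero]; rintro rfl
    exact (log_pos one_lt_two).ne' (by simpa using hq.symm)
  apply exp_intCast_ne_intCast hq0 (2 ^ q.den)
  have hnum : (q.num : ℝ) = q.den * log 2 := by
    rw [← hq, mul_comm]; exact_mod_cast (Rat.mul_den_eq_num q).symm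
  rw [hnum, ← log_pow, exp_log (by positivity)]
  simp

noncomputable def epsProfile (t : ℝ) : ℝ := 1 + t - 2 ^ t

noncomputable def tStar : ℝ := logb 2 (logb 2 (exp 1))

theorem eps_eq_epsProfile (x : ℝ) : eps x = epsProfile (⌈logb 2 x⌉ - logb 2 x) := rfl

theorem logb_two_exp_one : logb 2 (exp 1) = (log 2)⁻¹ := by
  simp [logb]

theorem two_rpow_tStar : (2 : ℝ) ^ tStar = (log 2)⁻¹ := by
  rw [tStar, rpow_logb two_pos (by norm_num) (by rw [logb_two_exp_one]; positivity),
    logb_two_exp_one]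

theorem tStar_eq_neg_logb_log_two : tStar = -logb 2 (log 2) := by
  rw [tStar, logb_two_exp_one, logb_inv]

theorem continuous_epsProfile : Continuous epsProfile :=
  (continuous_const.add continuous_id).sub
    (continuous_iff_continuousAt.mpr fun _ => continuousAt_const_rpow two_ne_zero)

theorem epsProfile_tStar : epsProfile tStar = delta := by
  rw [epsProfile, two_rpow_tStar, delta, ← tStar, logb_two_exp_one]
  ring

theorem epsProfile_lt_delta {t : ℝ} (ht : t ≠ tStar) : epsProfile t < delta := by
  have hlog : (0 : ℝ) < log 2 := log_pos one_lt_two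
  have hexp := add_one_lt_exp (x := log 2 * (t - tStar))
    (mul_ne_zero hlog.ne' (sub_ne_zero.mpr ht))
  have h2t : (2 : ℝ) ^ t = 2 ^ tStar * exp (log 2 * (t - tStar)) := by
    rw [← rpow_def_of_pos two_pos, ← rpow_add two_pos, add_sub_cancel]
  rw [← epsProfile_tStar, epsProfile, epsProfile, h2t, two_rpow_tStar]
  have := mul_lt_mul_of_pos_left hexp (inv_pos.mpr hlog)
  rw [mul_add, inv_mul_cancel_left₀ hlog.ne', mul_one] at this
  linarith

theorem epsProfile_le_delta (t : ℝ) : epsProfile t ≤ delta := by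
  rcases eq_or_ne t tStar with rfl | ht
  · exact epsProfile_tStar.le
  · exact (epsProfile_lt_delta ht).le

theorem exists_eq_zpow_mul_log_two_of_eps_eq_delta {x : ℝ} (hx : 0 < x) (h : eps x = delta) :
    ∃ m : ℤ, x = 2 ^ m * log 2 := by
  refine ⟨⌈logb 2 x⌉, ?_⟩
  have ht : (⌈logb 2 x⌉ : ℝ) - logb 2 x = tStar := by
    by_contra ht
    exact (epsProfile_lt_delta ht).ne h
  calc x = 2 ^ logb 2 x := (rpow_logb two_pos (by norm_num) hx).symm
    _ = 2 ^ ((⌈logb 2 x⌉ : ℝ) - tStar) := by rw [← ht, sub_sub_cancel]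
    _ = 2 ^ ⌈logb 2 x⌉ * log 2 := by
      rw [rpow_sub two_pos, two_rpow_tStar, rpow_intCast, div_inv_eq_mul]

theorem eps_ratCast_ne_delta {q : ℚ} (hq : 0 < q) : eps q ≠ delta := by
  intro h
  obtain ⟨m, hm⟩ := exists_eq_zpow_mul_log_two_of_eps_eq_delta (by exact_mod_cast hq) h
  apply irrational_log_two ⟨2 ^ (-m) * q, ?_⟩
  push_cast
  rw [hm, ← mul_assoc, ← zpow_add₀ two_ne_zero, neg_add_cancel, zpow_zero, one_mul]

theorem ceil_logb_eq_of_zpow_sub_one_lt_of_le_zpow {b x : ℝ} {k : ℤ} (hb : 1 < b)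
    (h₁ : b ^ (k - 1) < x) (h₂ : x ≤ b ^ k) : ⌈logb b x⌉ = k := by
  have hx : 0 < x := lt_trans (zpow_pos (by linarith) _) h₁
  rw [Int.ceil_eq_iff, lt_logb_iff_rpow_lt hb hx, logb_le_iff_le_rpow hb hx]
  rw [← Int.cast_one, ← Int.cast_sub, rpow_intCast, rpow_intCast]
  exact ⟨h₁, h₂⟩

theorem tendsto_natCeil_two_pow_mul_div_two_pow {c : ℝ} (hc : 0 < c) :
    Tendsto (fun k : ℕ => (⌈2 ^ k * c⌉₊ : ℝ) / 2 ^ k) atTop (𝓝 c) := by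
  have hlim : Tendsto (fun k : ℕ => (2 : ℝ) ^ k * c) atTop atTop :=
    (tendsto_pow_atTop_atTop_of_one_lt one_lt_two).atTop_mul_const hc
  have := (tendsto_nat_ceil_div_atTop.comp hlim).mul_const c
  rw [one_mul] at this
  refine this.congr fun k => ?_
  simp only [Function.comp_apply]
  field_simp

theorem ceil_logb_two_natCeil_two_pow_mul_log_two {k : ℕ} (hk : 2 ≤ k) :
    ⌈logb 2 ⌈2 ^ k * log 2⌉₊⌉ = k := by
  have hlog₁ : 1 / 2 < log 2 := by linarith [log_two_gt_d9]
  have hlog₂ : log 2 < 3 / 4 := by linarith [log_two_lt_d9]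
  have h4 : (4 : ℝ) ≤ 2 ^ k := by
    calc (4 : ℝ) = 2 ^ 2 := by norm_num
      _ ≤ 2 ^ k := pow_le_pow_right₀ one_le_two hk
  apply ceil_logb_eq_of_zpow_sub_one_lt_of_le_zpow one_lt_two
  · calc (2 : ℝ) ^ ((k : ℤ) - 1) = 2 ^ k / 2 := by
          rw [zpow_sub₀ two_ne_zero, zpow_one, zpow_natCast]
      _ < 2 ^ k * log 2 := by nlinarith
      _ ≤ _ := Nat.le_ceil _
  · calc (⌈2 ^ k * log 2⌉₊ : ℝ) ≤ 2 ^ k * log 2 + 1 := (Nat.ceil_lt_add_one (by positivity)).le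
      _ ≤ 2 ^ k := by nlinarith
      _ = _ := (zpow_natCast _ _).symm

theorem tendsto_eps_natCeil_two_pow_mul_log_two :
    Tendsto (fun k : ℕ => eps ⌈2 ^ k * log 2⌉₊) atTop (𝓝 delta) := by
  have hlog : (0 : ℝ) < log 2 := log_pos one_lt_two
  have hcont : ContinuousAt (fun y => epsProfile (-logb 2 y)) (log 2) :=
    continuous_epsProfile.continuousAt.comp (continuousAt_logb hlog.ne').neg
  have := hcont.tendsto.comp (tendsto_natCeil_two_pow_mul_div_two_pow hlog)
  rw [← tStar_eq_neg_logb_log_two, epsProfile_tStar] at this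
  refine this.congr' ?_
  filter_upwards [eventually_ge_atTop 2] with k hk
  rw [Function.comp_apply, eps_eq_epsProfile, ceil_logb_two_natCeil_two_pow_mul_log_two hk,
    logb_div (by positivity) (by positivity), ← rpow_natCast, logb_rpow two_pos (by norm_num),
    Int.cast_natCast, neg_sub]

theorem eps_sup_on_integers :
    (∀ n : ℕ, 1 ≤ n → eps n ≠ delta) ∧
    IsLUB {x : ℝ | ∃ n : ℕ, 1 ≤ n ∧ x = eps n} delta := by
  refine ⟨fun n hn => ?_, isLUB_of_mem_closure ?_ ?_⟩
  · simpa using eps_ratCast_ne_delta (q := n) (by exact_mod_cast hn)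
  · rintro _ ⟨n, -, rfl⟩
    exact epsProfile_le_delta _
  · exact mem_closure_of_tendsto tendsto_eps_natCeil_two_pow_mul_log_two
      (Eventually.of_forall fun k => ⟨_, Nat.one_le_ceil_iff.mpr (by positivity), rfl⟩)
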